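/- Let {z^t} be the sequence produced by ExRM+ with stepsize η ∈ (0, 1/L_F). If {z^t} has a limit point ẑ of the form ẑ = a·z* for some z* ∈ Z and some real a ≥ 1 (i.e., ẑ is colinear with a pair of strategies), then the whole sequence {z^t} converges to ẑ. -/

import Mathlib

open scoped BigOperators RealInnerProductSpace
open Filter Topology

noncomputable section

abbrev Vec (d : ℕ) := EuclideanSpace ℝ (Fin d)
abbrev Joint (d1 d2 : ℕ) := EuclideanSpace ℝ (Fin d1 ⊕ Fin d2)

/-- First block of a joint vector. -/
def xPart {d1 d2 : ℕ} (z : Joint d1 d2) : Vec d1 := WithLp.toLp 2 (fun i => z (Sum.inl i))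

/-- Second block of a joint vector. -/
def yPart {d1 d2 : ℕ} (z : Joint d1 d2) : Vec d2 := WithLp.toLp 2 (fun j => z (Sum.inr j))

/-- Assemble a joint vector from its two blocks. -/
def joinPt {d1 d2 : ℕ} (x : Vec d1) (y : Vec d2) : Joint d1 d2 :=
  WithLp.toLp 2 (fun s => Sum.elim (fun i => x i) (fun j => y j) s)

/-- The probability simplex Δ^d. -/
def simplexSet (d : ℕ) : Set (Vec d) := {x | (∀ i, 0 ≤ x i) ∧ ∑ i, x i = 1}

/-- The clipped positive orthant Δ^d_≥. -/
def clippedSet (d : ℕ) : Set (Vec d) := {u | (∀ i, 0 ≤ u i) ∧ 1 ≤ ∑ i, u i}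

/-- Z = Δ^{d1} × Δ^{d2}, as a subset of the joint Euclidean space. -/
def Zset (d1 d2 : ℕ) : Set (Joint d1 d2) :=
  {z | xPart z ∈ simplexSet d1 ∧ yPart z ∈ simplexSet d2}

/-- Z_≥ = Δ^{d1}_≥ × Δ^{d2}_≥. -/
def ZgeSet (d1 d2 : ℕ) : Set (Joint d1 d2) :=
  {z | xPart z ∈ clippedSet d1 ∧ yPart z ∈ clippedSet d2}

/-- Bilinear payoff xᵀ A y. -/
def payoff {d1 d2 : ℕ} (A : Matrix (Fin d1) (Fin d2) ℝ) (x : Vec d1) (y : Vec d2) : ℝ :=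
  ∑ i, ∑ j, x i * A i j * y j

/-- Duality gap of a pair of strategies. -/
def dualGap {d1 d2 : ℕ} (A : Matrix (Fin d1) (Fin d2) ℝ) (x : Vec d1) (y : Vec d2) : ℝ :=
  sSup ((fun y' => payoff A x y') '' simplexSet d2) -
    sInf ((fun x' => payoff A x' y) '' simplexSet d1)

/-- Nash equilibrium: a feasible pair with zero duality gap. -/
def IsNash {d1 d2 : ℕ} (A : Matrix (Fin d1) (Fin d2) ℝ) (x : Vec d1) (y : Vec d2) : Prop :=
  x ∈ simplexSet d1 ∧ y ∈ simplexSet d2 ∧ dualGap A x y = 0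

/-- Strict Nash equilibrium: unique best responses on both sides. -/
def IsStrictNash {d1 d2 : ℕ} (A : Matrix (Fin d1) (Fin d2) ℝ)
    (xs : Vec d1) (ys : Vec d2) : Prop :=
  IsNash A xs ys ∧
  (∀ x ∈ simplexSet d1, x ≠ xs → payoff A xs ys < payoff A x ys) ∧
  (∀ y ∈ simplexSet d2, y ≠ ys → payoff A xs y < payoff A xs ys)

/-- ℓ₁ normalization of a block. -/
def normPart {d : ℕ} (u : Vec d) : Vec d := (∑ i, |u i|)⁻¹ • u

/-- ℓ₁ normalization with the convention 0/0 = (1/d)·1. -/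
def normPart0 {d : ℕ} (u : Vec d) : Vec d :=
  if (∑ i, |u i|) = 0 then (WithLp.toLp 2 (fun _ => (d : ℝ)⁻¹)) else (∑ i, |u i|)⁻¹ • u

/-- The normalization operator g. -/
def gNorm {d1 d2 : ℕ} (z : Joint d1 d2) : Joint d1 d2 :=
  joinPt (normPart (xPart z)) (normPart (yPart z))

/-- The regret operator F. -/
def Fop {d1 d2 : ℕ} (A : Matrix (Fin d1) (Fin d2) ℝ) (z : Joint d1 d2) : Joint d1 d2 :=
  joinPt
    (WithLp.toLp 2 (fun i => (∑ j, A i j * normPart (yPart z) j) -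
      payoff A (normPart (xPart z)) (normPart (yPart z))))
    (WithLp.toLp 2 (fun j => -(∑ i, A i j * normPart (xPart z) i) +
      payoff A (normPart (xPart z)) (normPart (yPart z))))

/-- Spectral (ℓ₂ operator) norm of a matrix. -/
def opNorm {d1 d2 : ℕ} (A : Matrix (Fin d1) (Fin d2) ℝ) : ℝ :=
  ‖LinearMap.toContinuousLinearMap (Matrix.toEuclideanLin A)‖

/-- Lipschitz constant L_F = √6 ‖A‖_op max{d1,d2}. -/
def LF {d1 d2 : ℕ} (A : Matrix (Fin d1) (Fin d2) ℝ) : ℝ :=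
  Real.sqrt 6 * opNorm A * max (d1 : ℝ) (d2 : ℝ)

open Classical in
/-- Euclidean (metric) projection onto a set: the distance minimizer, when it exists. -/
def projOn {E : Type*} [NormedAddCommGroup E] [InnerProductSpace ℝ E]
    (S : Set E) (u : E) : E :=
  if h : ∃ p ∈ S, ∀ q ∈ S, ‖u - p‖ ≤ ‖u - q‖ then h.choose else u

/-- The set of Nash equilibria, in the joint space. -/
def nashSet {d1 d2 : ℕ} (A : Matrix (Fin d1) (Fin d2) ℝ) : Set (Joint d1 d2) :=
  {z | IsNash A (xPart z) (yPart z)}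

/-- SOL(Z_≥, F): solutions of the variational inequality. -/
def SolSet {d1 d2 : ℕ} (A : Matrix (Fin d1) (Fin d2) ℝ) : Set (Joint d1 d2) :=
  {z | z ∈ ZgeSet d1 d2 ∧ ∀ z' ∈ ZgeSet d1 d2, ⟪Fop A z, z - z'⟫ ≤ 0}

/-- p is a limit point of the sequence z: limit of a convergent subsequence. -/
def IsLimitPoint {E : Type*} [TopologicalSpace E] (z : ℕ → E) (p : E) : Prop :=
  ∃ φ : ℕ → ℕ, StrictMono φ ∧ Tendsto (z ∘ φ) atTop (𝓝 p)

/-- The ExRM⁺ dynamics: z are the main iterates, zh the half-iterates. -/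
def ExRM {d1 d2 : ℕ} (A : Matrix (Fin d1) (Fin d2) ℝ) (η : ℝ)
    (z zh : ℕ → Joint d1 d2) : Prop :=
  z 0 ∈ Zset d1 d2 ∧
  (∀ t, zh t = projOn (ZgeSet d1 d2) (z t - η • Fop A (z t))) ∧
  (∀ t, z (t + 1) = projOn (ZgeSet d1 d2) (z t - η • Fop A (zh t)))

/-- The SPRM⁺ dynamics (z^{-1} = w^0). -/
def SPRM {d1 d2 : ℕ} (A : Matrix (Fin d1) (Fin d2) ℝ) (η : ℝ)
    (w z : ℕ → Joint d1 d2) : Prop :=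
  w 0 ∈ Zset d1 d2 ∧
  z 0 = projOn (ZgeSet d1 d2) (w 0 - η • Fop A (w 0)) ∧
  (∀ t, z (t + 1) = projOn (ZgeSet d1 d2) (w (t + 1) - η • Fop A (z t))) ∧
  (∀ t, w (t + 1) = projOn (ZgeSet d1 d2) (w t - η • Fop A (z t)))

/-- z^{t-1} with the convention z^{-1} = w^0. -/
def zPrev {d1 d2 : ℕ} (w z : ℕ → Joint d1 d2) : ℕ → Joint d1 d2 :=
  fun t => if t = 0 then w 0 else z (t - 1)



namespace ExProof

variable {d1 d2 d : ℕ}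

/-! ### basic coordinate lemmas -/

lemma joinPt_inl (x : Vec d1) (y : Vec d2) (i : Fin d1) : joinPt x y (Sum.inl i) = x i := rfl
lemma joinPt_inr (x : Vec d1) (y : Vec d2) (j : Fin d2) : joinPt x y (Sum.inr j) = y j := rfl
lemma xPart_apply (z : Joint d1 d2) (i : Fin d1) : xPart z i = z (Sum.inl i) := rfl
lemma yPart_apply (z : Joint d1 d2) (j : Fin d2) : yPart z j = z (Sum.inr j) := rfl

lemma joinPt_sub (x x' : Vec d1) (y y' : Vec d2) :
    joinPt x y - joinPt x' y' = joinPt (x - x') (y - y') := by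
  ext s; cases s <;> rfl

lemma inner_vec (v w : Vec d) : ⟪v, w⟫ = ∑ i, v i * w i := by
  simp [PiLp.inner_apply, RCLike.inner_apply, mul_comm]

lemma normsq_vec (v : Vec d) : ‖v‖ ^ 2 = ∑ i, (v i) ^ 2 := by
  rw [← real_inner_self_eq_norm_sq, inner_vec]
  simp [sq]

lemma inner_joint (z w : Joint d1 d2) :
    ⟪z, w⟫ = ∑ i, xPart z i * xPart w i + ∑ j, yPart z j * yPart w j := by
  rw [show (⟪z, w⟫ = ∑ s, z s * w s) by simp [PiLp.inner_apply, RCLike.inner_apply, mul_comm]]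
  rw [Fintype.sum_sum_type]
  rfl

lemma normsq_joinPt (x : Vec d1) (y : Vec d2) :
    ‖joinPt x y‖ ^ 2 = ‖x‖ ^ 2 + ‖y‖ ^ 2 := by
  rw [← real_inner_self_eq_norm_sq, inner_joint, normsq_vec, normsq_vec]
  simp [sq, joinPt_inl, joinPt_inr]
  rfl

lemma normsq_joint (z : Joint d1 d2) : ‖z‖ ^ 2 = ‖xPart z‖ ^ 2 + ‖yPart z‖ ^ 2 := by
  have : z = joinPt (xPart z) (yPart z) := by ext s; cases s <;> rfl
  rw [this, normsq_joinPt]; rfl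

end ExProof

namespace ExProof

variable {d1 d2 d : ℕ}

/-! ### simplex / clipped / normPart -/

lemma norm_le_one_of_simplex {x : Vec d} (hx : x ∈ simplexSet d) : ‖x‖ ≤ 1 := by
  have h2 : ‖x‖ ^ 2 ≤ 1 := by
    rw [normsq_vec]
    calc ∑ i, (x i) ^ 2 ≤ (∑ i, x i) ^ 2 :=
          Finset.sum_sq_le_sq_sum_of_nonneg (fun i _ => hx.1 i)
      _ = 1 := by rw [hx.2]; norm_num
  nlinarith [norm_nonneg x]

lemma clipped_sum_pos {u : Vec d} (hu : u ∈ clippedSet d) : 0 < ∑ i, u i :=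
  lt_of_lt_of_le one_pos hu.2

lemma clipped_abs_sum {u : Vec d} (hu : u ∈ clippedSet d) : (∑ i, |u i|) = ∑ i, u i := by
  exact Finset.sum_congr rfl fun i _ => abs_of_nonneg (hu.1 i)

lemma normPart_eq {u : Vec d} (hu : u ∈ clippedSet d) :
    normPart u = (∑ i, u i)⁻¹ • u := by
  rw [normPart, clipped_abs_sum hu]

lemma normPart_apply {u : Vec d} (hu : u ∈ clippedSet d) (i : Fin d) :
    normPart u i = (∑ k, u k)⁻¹ * u i := by
  rw [normPart_eq hu]; rfl

lemma normPart_mem_simplex {u : Vec d} (hu : u ∈ clippedSet d) :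
    normPart u ∈ simplexSet d := by
  have hs := clipped_sum_pos hu
  constructor
  · intro i; rw [normPart_apply hu]
    exact mul_nonneg (inv_nonneg.2 hs.le) (hu.1 i)
  · rw [Finset.sum_congr rfl fun i _ => normPart_apply hu i, ← Finset.mul_sum]
    field_simp

lemma smul_normPart {u : Vec d} (hu : u ∈ clippedSet d) :
    (∑ i, u i) • normPart u = u := by
  rw [normPart_eq hu, smul_smul, mul_inv_cancel₀ (clipped_sum_pos hu).ne', one_smul]

lemma normPart_smul_simplex {x : Vec d} (hx : x ∈ simplexSet d) {a : ℝ} (ha : 0 < a) :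
    normPart (a • x) = x := by
  have h1 : ∀ i, (a • x) i = a * x i := fun i => rfl
  have hsum : (∑ i, |(a • x) i|) = a := by
    rw [Finset.sum_congr rfl fun i (_ : i ∈ Finset.univ) =>
      (by rw [h1, abs_of_nonneg (mul_nonneg ha.le (hx.1 i))] : |(a • x) i| = a * x i)]
    rw [← Finset.mul_sum, hx.2, mul_one]
  rw [normPart, hsum, inv_smul_smul₀ ha.ne']

/-! ### payoff algebra -/

lemma payoff_smul_left (A : Matrix (Fin d1) (Fin d2) ℝ) (c : ℝ) (x : Vec d1) (y : Vec d2) :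
    payoff A (c • x) y = c * payoff A x y := by
  simp only [payoff, Finset.mul_sum]
  refine Finset.sum_congr rfl fun i _ => Finset.sum_congr rfl fun j _ => ?_
  show (c * x i) * A i j * y j = _
  ring

lemma payoff_smul_right (A : Matrix (Fin d1) (Fin d2) ℝ) (c : ℝ) (x : Vec d1) (y : Vec d2) :
    payoff A x (c • y) = c * payoff A x y := by
  simp only [payoff, Finset.mul_sum]
  refine Finset.sum_congr rfl fun i _ => Finset.sum_congr rfl fun j _ => ?_
  show x i * A i j * (c * y j) = _
  ring

lemma payoff_sub_left (A : Matrix (Fin d1) (Fin d2) ℝ) (x x' : Vec d1) (y : Vec d2) :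
    payoff A (x - x') y = payoff A x y - payoff A x' y := by
  simp only [payoff, ← Finset.sum_sub_distrib]
  refine Finset.sum_congr rfl fun i _ => Finset.sum_congr rfl fun j _ => ?_
  show (x i - x' i) * A i j * y j = _
  ring

lemma payoff_sub_right (A : Matrix (Fin d1) (Fin d2) ℝ) (x : Vec d1) (y y' : Vec d2) :
    payoff A x (y - y') = payoff A x y - payoff A x y' := by
  simp only [payoff, ← Finset.sum_sub_distrib]
  refine Finset.sum_congr rfl fun i _ => Finset.sum_congr rfl fun j _ => ?_
  show x i * A i j * (y j - y' j) = _
  ring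

end ExProof

namespace ExProof

variable {d1 d2 d : ℕ}

/-! ### operator norm facts -/

lemma payoff_eq_left (A : Matrix (Fin d1) (Fin d2) ℝ) (x : Vec d1) (y : Vec d2) :
    payoff A x y = ∑ i, x i * ∑ j, A i j * y j := by
  refine Finset.sum_congr rfl fun i _ => ?_
  rw [Finset.mul_sum]
  exact Finset.sum_congr rfl fun j _ => by ring

lemma payoff_eq_right (A : Matrix (Fin d1) (Fin d2) ℝ) (x : Vec d1) (y : Vec d2) :
    payoff A x y = ∑ j, y j * ∑ i, A i j * x i := by
  rw [payoff, Finset.sum_comm]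
  refine Finset.sum_congr rfl fun j _ => ?_
  rw [Finset.mul_sum]
  exact Finset.sum_congr rfl fun i _ => by ring

/-- A·y as a Euclidean vector. -/
def AmulY (A : Matrix (Fin d1) (Fin d2) ℝ) (y : Vec d2) : Vec d1 :=
  WithLp.toLp 2 (fun i => ∑ j, A i j * y j)

/-- Aᵀ·x as a Euclidean vector. -/
def ATmulX (A : Matrix (Fin d1) (Fin d2) ℝ) (x : Vec d1) : Vec d2 :=
  WithLp.toLp 2 (fun j => ∑ i, A i j * x i)

lemma AmulY_apply (A : Matrix (Fin d1) (Fin d2) ℝ) (y : Vec d2) (i : Fin d1) :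
    AmulY A y i = ∑ j, A i j * y j := rfl

lemma ATmulX_apply (A : Matrix (Fin d1) (Fin d2) ℝ) (x : Vec d1) (j : Fin d2) :
    ATmulX A x j = ∑ i, A i j * x i := rfl

lemma mulVec_norm_le (A : Matrix (Fin d1) (Fin d2) ℝ) (y : Vec d2) :
    ‖AmulY A y‖ ≤ opNorm A * ‖y‖ := by
  have h : AmulY A y = (LinearMap.toContinuousLinearMap (Matrix.toEuclideanLin A)) y := by
    ext i
    simp [AmulY, Matrix.toEuclideanLin_apply, Matrix.mulVec, dotProduct]
  rw [h, opNorm]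
  exact (LinearMap.toContinuousLinearMap (Matrix.toEuclideanLin A)).le_opNorm y

lemma payoff_abs_le (A : Matrix (Fin d1) (Fin d2) ℝ) (x : Vec d1) (y : Vec d2) :
    |payoff A x y| ≤ opNorm A * ‖x‖ * ‖y‖ := by
  have h : payoff A x y = ⟪x, AmulY A y⟫ := by
    rw [inner_vec, payoff_eq_left]; rfl
  rw [h]
  calc |⟪x, AmulY A y⟫| ≤ ‖x‖ * ‖AmulY A y‖ := abs_real_inner_le_norm _ _
    _ ≤ ‖x‖ * (opNorm A * ‖y‖) := by
        have := mulVec_norm_le A y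
        have hx := norm_nonneg x
        nlinarith
    _ = opNorm A * ‖x‖ * ‖y‖ := by ring

lemma mulVecT_norm_le (A : Matrix (Fin d1) (Fin d2) ℝ) (x : Vec d1) :
    ‖ATmulX A x‖ ≤ opNorm A * ‖x‖ := by
  set w : Vec d2 := ATmulX A x with hw
  have h2 : ‖w‖ ^ 2 = payoff A x w := by
    rw [normsq_vec, payoff_eq_right]
    refine Finset.sum_congr rfl fun j _ => ?_
    rw [sq]
    rfl
  have h3 : ‖w‖ ^ 2 ≤ opNorm A * ‖x‖ * ‖w‖ := by
    rw [h2]; exact (le_abs_self _).trans (payoff_abs_le A x w)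
  rcases eq_or_lt_of_le (norm_nonneg w) with h | h
  · rw [← h, opNorm]; positivity
  · nlinarith

/-! ### the key quadratic lemmas -/

lemma erase_bound (w : Vec d) (j : Fin d) :
    (∑ k, w k - w j) ^ 2 ≤ ((d : ℝ) - 1) * ((∑ i, (w i) ^ 2) - (w j) ^ 2) := by
  have h1 : ∑ k, w k - w j = ∑ k ∈ Finset.univ.erase j, w k :=
    (Finset.sum_erase_eq_sub (Finset.mem_univ j)).symm
  have h2 : (∑ i, (w i) ^ 2) - (w j) ^ 2 = ∑ k ∈ Finset.univ.erase j, (w k) ^ 2 :=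
    (Finset.sum_erase_eq_sub (Finset.mem_univ j)).symm
  rw [h1, h2]
  have := sq_sum_le_card_mul_sum_sq (s := Finset.univ.erase j) (f := fun k => w k)
  have hcard : ((Finset.univ.erase j).card : ℝ) = (d : ℝ) - 1 := by
    rw [Finset.card_erase_of_mem (Finset.mem_univ j)]
    simp [Nat.cast_sub (Nat.one_le_iff_ne_zero.2 (Nat.pos_iff_ne_zero.1 j.pos))]
  calc (∑ k ∈ Finset.univ.erase j, w k) ^ 2
      ≤ ((Finset.univ.erase j).card : ℝ) * ∑ k ∈ Finset.univ.erase j, (w k) ^ 2 := by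
        exact_mod_cast this
    _ = ((d : ℝ) - 1) * ∑ k ∈ Finset.univ.erase j, (w k) ^ 2 := by rw [hcard]

lemma key1 {x : Vec d} (hx : x ∈ simplexSet d) (w : Vec d) :
    ∑ i, (w i - x i * (∑ k, w k)) ^ 2 ≤ (d : ℝ) * ∑ i, (w i) ^ 2 := by
  set T := ∑ k, w k with hT
  set S2 := ∑ i, (w i) ^ 2 with hS2
  have stepA : ∀ j : Fin d, S2 - 2 * T * w j + T ^ 2 ≤ (d : ℝ) * S2 := by
    intro j
    have h1 := erase_bound w j
    have h2 : (w j) ^ 2 ≤ S2 := by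
      rw [hS2]
      exact Finset.single_le_sum (f := fun i => (w i) ^ 2) (fun i _ => sq_nonneg _)
        (Finset.mem_univ j)
    have hd : (1 : ℝ) ≤ d := by exact_mod_cast j.pos
    nlinarith [sq_nonneg (w j)]
  have expand : ∑ i, (w i - x i * T) ^ 2
      = S2 - 2 * T * (∑ i, x i * w i) + T ^ 2 * ∑ i, (x i) ^ 2 := by
    rw [Finset.sum_congr rfl (fun i _ =>
      (by ring : (w i - x i * T) ^ 2 = ((w i) ^ 2 - 2 * T * (x i * w i)) + T ^ 2 * (x i) ^ 2)),
      Finset.sum_add_distrib, Finset.sum_sub_distrib, ← Finset.mul_sum, ← Finset.mul_sum]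
  have hx2 : ∑ i, (x i) ^ 2 ≤ 1 := by
    have := Finset.sum_sq_le_sq_sum_of_nonneg (s := Finset.univ) (f := fun i => x i)
      (fun i _ => hx.1 i)
    rwa [hx.2, one_pow] at this
  have split : S2 - 2 * T * (∑ i, x i * w i) + T ^ 2
      = ∑ j, x j * (S2 - 2 * T * w j + T ^ 2) := by
    rw [Finset.sum_congr rfl (fun j _ =>
      (by ring : x j * (S2 - 2 * T * w j + T ^ 2)
        = x j * (S2 + T ^ 2) - 2 * T * (x j * w j))),
      Finset.sum_sub_distrib, ← Finset.sum_mul, ← Finset.mul_sum, hx.2]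
    ring
  have hsum : ∑ j, x j * (S2 - 2 * T * w j + T ^ 2) ≤ ∑ j, x j * ((d : ℝ) * S2) := by
    refine Finset.sum_le_sum fun j _ => mul_le_mul_of_nonneg_left (stepA j) (hx.1 j)
  rw [← Finset.sum_mul, hx.2, one_mul] at hsum
  have hT2 : T ^ 2 * ∑ i, (x i) ^ 2 ≤ T ^ 2 := by nlinarith [sq_nonneg T]
  rw [expand]
  linarith [split ▸ hsum]

lemma key2 {x : Vec d} (hx : x ∈ simplexSet d) (p : Vec d) :
    ∑ i, (p i - ∑ j, x j * p j) ^ 2 ≤ (d : ℝ) * ∑ i, (p i) ^ 2 := by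
  set T := ∑ k, p k with hT
  set S2 := ∑ i, (p i) ^ 2 with hS2
  set c := ∑ j, x j * p j with hc
  have stepA : ∀ j : Fin d, S2 - 2 * T * p j + (d : ℝ) * (p j) ^ 2 ≤ (d : ℝ) * S2 := by
    intro j
    have h1 := erase_bound p j
    have h2 : (p j) ^ 2 ≤ S2 := by
      rw [hS2]
      exact Finset.single_le_sum (f := fun i => (p i) ^ 2) (fun i _ => sq_nonneg _)
        (Finset.mem_univ j)
    have hd : (1 : ℝ) ≤ d := by exact_mod_cast j.pos
    nlinarith [sq_nonneg (T - p j + p j), sq_nonneg T]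
  have hc2 : c ^ 2 ≤ ∑ j, x j * (p j) ^ 2 := by
    have h0 : (0 : ℝ) ≤ ∑ j, x j * (p j - c) ^ 2 :=
      Finset.sum_nonneg fun j _ => mul_nonneg (hx.1 j) (sq_nonneg _)
    have hexp : ∑ j, x j * (p j - c) ^ 2
        = (∑ j, x j * (p j) ^ 2) - 2 * c * c + c ^ 2 * 1 := by
      rw [Finset.sum_congr rfl (fun j _ =>
        (by ring : x j * (p j - c) ^ 2
          = (x j * (p j) ^ 2 - 2 * c * (x j * p j)) + c ^ 2 * x j)),
        Finset.sum_add_distrib, Finset.sum_sub_distrib, ← Finset.mul_sum, ← Finset.mul_sum,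
        ← hc, hx.2]
    nlinarith [h0, hexp]
  have expand : ∑ i, (p i - c) ^ 2 = S2 - 2 * T * c + (d : ℝ) * c ^ 2 := by
    rw [Finset.sum_congr rfl (fun i _ =>
      (by ring : (p i - c) ^ 2 = ((p i) ^ 2 - 2 * c * p i) + c ^ 2)),
      Finset.sum_add_distrib, Finset.sum_sub_distrib, ← Finset.mul_sum, Finset.sum_const,
      Finset.card_univ, Fintype.card_fin, nsmul_eq_mul]
    ring
  have split : S2 - 2 * T * c + (d : ℝ) * (∑ j, x j * (p j) ^ 2)
      = ∑ j, x j * (S2 - 2 * T * p j + (d : ℝ) * (p j) ^ 2) := by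
    rw [Finset.sum_congr rfl (fun j _ =>
      (by ring : x j * (S2 - 2 * T * p j + (d : ℝ) * (p j) ^ 2)
        = x j * S2 - 2 * T * (x j * p j) + (d : ℝ) * (x j * (p j) ^ 2))),
      Finset.sum_add_distrib, Finset.sum_sub_distrib, ← Finset.sum_mul, ← Finset.mul_sum,
      ← Finset.mul_sum, ← hc, hx.2]
    ring
  have hsum : ∑ j, x j * (S2 - 2 * T * p j + (d : ℝ) * (p j) ^ 2)
      ≤ ∑ j, x j * ((d : ℝ) * S2) := by
    refine Finset.sum_le_sum fun j _ => mul_le_mul_of_nonneg_left (stepA j) (hx.1 j)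
  rw [← Finset.sum_mul, hx.2, one_mul] at hsum
  have hd0 : (0 : ℝ) ≤ d := Nat.cast_nonneg d
  rw [expand]
  nlinarith [split ▸ hsum]

end ExProof

namespace ExProof

variable {d1 d2 d : ℕ}

lemma opNorm_nonneg (A : Matrix (Fin d1) (Fin d2) ℝ) : 0 ≤ opNorm A := by
  rw [opNorm]; exact norm_nonneg _

lemma sub_apply_vec (u u' : Vec d) (i : Fin d) : (u - u') i = u i - u' i := rfl

lemma normPart_lip {u u' : Vec d} (hu : u ∈ clippedSet d) (hu' : u' ∈ clippedSet d) :
    ‖normPart u - normPart u'‖ ^ 2 ≤ (d : ℝ) * ‖u - u'‖ ^ 2 := by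
  have hs := clipped_sum_pos hu
  have hs' := clipped_sum_pos hu'
  have hsub : ∑ k, (u - u') k = (∑ k, u k) - ∑ k, u' k := by
    simp [sub_apply_vec, Finset.sum_sub_distrib]
  have hcoord : ∀ i, (normPart u - normPart u') i
      = (∑ k, u' k)⁻¹ * ((u - u') i - normPart u i * (∑ k, (u - u') k)) := by
    intro i
    rw [sub_apply_vec, normPart_apply hu, normPart_apply hu', sub_apply_vec, hsub]
    field_simp
    ring
  rw [normsq_vec, normsq_vec]
  calc ∑ i, ((normPart u - normPart u') i) ^ 2
      = (∑ k, u' k)⁻¹ ^ 2 * ∑ i, ((u - u') i - normPart u i * (∑ k, (u - u') k)) ^ 2 := by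
        rw [Finset.mul_sum]
        exact Finset.sum_congr rfl fun i _ => by rw [hcoord i]; ring
    _ ≤ 1 * ∑ i, ((u - u') i - normPart u i * (∑ k, (u - u') k)) ^ 2 := by
        have h1 : (∑ k, u' k)⁻¹ ≤ 1 := by
          rw [inv_le_one_iff₀]; right; exact hu'.2
        have h0 : 0 ≤ (∑ k, u' k)⁻¹ := inv_nonneg.2 hs'.le
        have hnn : 0 ≤ ∑ i, ((u - u') i - normPart u i * (∑ k, (u - u') k)) ^ 2 :=
          Finset.sum_nonneg fun i _ => sq_nonneg _
        have hsq : (∑ k, u' k)⁻¹ ^ 2 ≤ 1 := by nlinarith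
        nlinarith
    _ = ∑ i, ((u - u') i - normPart u i * (∑ k, (u - u') k)) ^ 2 := one_mul _
    _ ≤ (d : ℝ) * ∑ i, ((u - u') i) ^ 2 := key1 (normPart_mem_simplex hu) (u - u')

lemma Fop_inl (A : Matrix (Fin d1) (Fin d2) ℝ) (z : Joint d1 d2) (i : Fin d1) :
    Fop A z (Sum.inl i) = (∑ j, A i j * normPart (yPart z) j) -
      payoff A (normPart (xPart z)) (normPart (yPart z)) := rfl

lemma Fop_inr (A : Matrix (Fin d1) (Fin d2) ℝ) (z : Joint d1 d2) (j : Fin d2) :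
    Fop A z (Sum.inr j) = -(∑ i, A i j * normPart (xPart z) i) +
      payoff A (normPart (xPart z)) (normPart (yPart z)) := rfl

set_option maxHeartbeats 2000000 in
lemma Fop_lip {A : Matrix (Fin d1) (Fin d2) ℝ} (hd1 : 1 ≤ d1) (hd2 : 1 ≤ d2)
    {z z' : Joint d1 d2} (hz : z ∈ ZgeSet d1 d2) (hz' : z' ∈ ZgeSet d1 d2) :
    ‖Fop A z - Fop A z'‖ ≤ LF A * ‖z - z'‖ := by
  set X := normPart (xPart z) with hXdef
  set Y := normPart (yPart z) with hYdef
  set X' := normPart (xPart z') with hX'def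
  set Y' := normPart (yPart z') with hY'def
  have hX : X ∈ simplexSet d1 := normPart_mem_simplex hz.1
  have hY : Y ∈ simplexSet d2 := normPart_mem_simplex hz.2
  have hX' : X' ∈ simplexSet d1 := normPart_mem_simplex hz'.1
  have hY' : Y' ∈ simplexSet d2 := normPart_mem_simplex hz'.2
  set δx : Vec d1 := X - X' with hδx
  set δy : Vec d2 := Y - Y' with hδy
  have hC : payoff A X Y - payoff A X' Y' = payoff A X δy + payoff A δx Y' := by
    rw [hδx, hδy, payoff_sub_right, payoff_sub_left]; ring
  -- coordinate formulas for the difference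
  have hB1 : ∀ i, (Fop A z - Fop A z') (Sum.inl i)
      = (AmulY A δy i - ∑ k, X k * AmulY A δy k) - payoff A δx Y' := by
    intro i
    have e1 : (Fop A z - Fop A z') (Sum.inl i) = Fop A z (Sum.inl i) - Fop A z' (Sum.inl i) := rfl
    rw [e1, Fop_inl, Fop_inl, ← hXdef, ← hYdef, ← hX'def, ← hY'def]
    have e2 : AmulY A δy i = (∑ j, A i j * Y j) - ∑ j, A i j * Y' j := by
      rw [AmulY_apply, ← Finset.sum_sub_distrib]
      exact Finset.sum_congr rfl fun j _ => by rw [hδy, sub_apply_vec]; ring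
    have e3 : (∑ k, X k * AmulY A δy k) = payoff A X δy := (payoff_eq_left A X δy).symm
    rw [e2, e3]
    have := hC
    linarith
  have hB2 : ∀ j, (Fop A z - Fop A z') (Sum.inr j)
      = -(ATmulX A δx j - ∑ k, Y' k * ATmulX A δx k) + payoff A X δy := by
    intro j
    have e1 : (Fop A z - Fop A z') (Sum.inr j) = Fop A z (Sum.inr j) - Fop A z' (Sum.inr j) := rfl
    rw [e1, Fop_inr, Fop_inr, ← hXdef, ← hYdef, ← hX'def, ← hY'def]
    have e2 : ATmulX A δx j = (∑ i, A i j * X i) - ∑ i, A i j * X' i := by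
      rw [ATmulX_apply, ← Finset.sum_sub_distrib]
      exact Finset.sum_congr rfl fun i _ => by rw [hδx, sub_apply_vec]; ring
    have e3 : (∑ k, Y' k * ATmulX A δx k) = payoff A δx Y' := (payoff_eq_right A δx Y').symm
    rw [e2, e3]
    have := hC
    linarith
  -- squared norm of difference, block by block
  have hns : ‖Fop A z - Fop A z'‖ ^ 2
      = (∑ i, ((Fop A z - Fop A z') (Sum.inl i)) ^ 2)
        + ∑ j, ((Fop A z - Fop A z') (Sum.inr j)) ^ 2 := by
    rw [normsq_joint, normsq_vec, normsq_vec]; rfl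
  set oA := opNorm A with hoA
  have hoA0 : 0 ≤ oA := opNorm_nonneg A
  -- bounds for the pieces
  have k2a : ∑ i, (AmulY A δy i - ∑ k, X k * AmulY A δy k) ^ 2
      ≤ (d1 : ℝ) * ‖AmulY A δy‖ ^ 2 := by
    rw [normsq_vec]; exact key2 hX (AmulY A δy)
  have k2b : ∑ j, (ATmulX A δx j - ∑ k, Y' k * ATmulX A δx k) ^ 2
      ≤ (d2 : ℝ) * ‖ATmulX A δx‖ ^ 2 := by
    rw [normsq_vec]; exact key2 hY' (ATmulX A δx)
  have hAy : ‖AmulY A δy‖ ^ 2 ≤ oA ^ 2 * ‖δy‖ ^ 2 := by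
    have := mulVec_norm_le A δy
    nlinarith [norm_nonneg (AmulY A δy), norm_nonneg δy]
  have hAx : ‖ATmulX A δx‖ ^ 2 ≤ oA ^ 2 * ‖δx‖ ^ 2 := by
    have := mulVecT_norm_le A δx
    nlinarith [norm_nonneg (ATmulX A δx), norm_nonneg δx]
  have hpay1 : (payoff A δx Y') ^ 2 ≤ oA ^ 2 * ‖δx‖ ^ 2 := by
    have h1 := payoff_abs_le A δx Y'
    have h2 : ‖Y'‖ ≤ 1 := norm_le_one_of_simplex hY'
    have h3 : |payoff A δx Y'| ≤ oA * ‖δx‖ := by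
      calc |payoff A δx Y'| ≤ oA * ‖δx‖ * ‖Y'‖ := h1
        _ ≤ oA * ‖δx‖ * 1 :=
            mul_le_mul_of_nonneg_left h2 (mul_nonneg hoA0 (norm_nonneg δx))
        _ = oA * ‖δx‖ := mul_one _
    nlinarith [abs_nonneg (payoff A δx Y'), sq_abs (payoff A δx Y'), norm_nonneg δx]
  have hpay2 : (payoff A X δy) ^ 2 ≤ oA ^ 2 * ‖δy‖ ^ 2 := by
    have h1 := payoff_abs_le A X δy
    have h2 : ‖X‖ ≤ 1 := norm_le_one_of_simplex hX
    have h3 : |payoff A X δy| ≤ oA * ‖δy‖ := by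
      calc |payoff A X δy| ≤ oA * ‖X‖ * ‖δy‖ := h1
        _ ≤ oA * 1 * ‖δy‖ := by
            have h4 : oA * ‖X‖ ≤ oA * 1 := mul_le_mul_of_nonneg_left h2 hoA0
            exact mul_le_mul_of_nonneg_right h4 (norm_nonneg δy)
        _ = oA * ‖δy‖ := by ring
    nlinarith [abs_nonneg (payoff A X δy), sq_abs (payoff A X δy), norm_nonneg δy]
  -- sum the blocks
  have blk1 : ∑ i, ((Fop A z - Fop A z') (Sum.inl i)) ^ 2
      ≤ 2 * (d1 : ℝ) * (oA ^ 2 * ‖δy‖ ^ 2) + 2 * (d1 : ℝ) * (oA ^ 2 * ‖δx‖ ^ 2) := by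
    have hpt : ∀ i, ((Fop A z - Fop A z') (Sum.inl i)) ^ 2
        ≤ 2 * (AmulY A δy i - ∑ k, X k * AmulY A δy k) ^ 2 + 2 * (payoff A δx Y') ^ 2 := by
      intro i; rw [hB1 i]
      nlinarith [sq_nonneg ((AmulY A δy i - ∑ k, X k * AmulY A δy k) + payoff A δx Y')]
    calc ∑ i, ((Fop A z - Fop A z') (Sum.inl i)) ^ 2
        ≤ ∑ i, (2 * (AmulY A δy i - ∑ k, X k * AmulY A δy k) ^ 2
            + 2 * (payoff A δx Y') ^ 2) := Finset.sum_le_sum fun i _ => hpt i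
      _ = 2 * (∑ i, (AmulY A δy i - ∑ k, X k * AmulY A δy k) ^ 2)
            + (d1 : ℝ) * (2 * (payoff A δx Y') ^ 2) := by
          rw [Finset.sum_add_distrib, ← Finset.mul_sum, Finset.sum_const, Finset.card_univ,
            Fintype.card_fin, nsmul_eq_mul]
      _ ≤ 2 * ((d1 : ℝ) * (oA ^ 2 * ‖δy‖ ^ 2)) + (d1 : ℝ) * (2 * (oA ^ 2 * ‖δx‖ ^ 2)) := by
          have hd1' : (0 : ℝ) ≤ d1 := Nat.cast_nonneg d1
          have := k2a.trans (by nlinarith : (d1 : ℝ) * ‖AmulY A δy‖ ^ 2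
            ≤ (d1 : ℝ) * (oA ^ 2 * ‖δy‖ ^ 2))
          nlinarith
      _ = 2 * (d1 : ℝ) * (oA ^ 2 * ‖δy‖ ^ 2) + 2 * (d1 : ℝ) * (oA ^ 2 * ‖δx‖ ^ 2) := by ring
  have blk2 : ∑ j, ((Fop A z - Fop A z') (Sum.inr j)) ^ 2
      ≤ 2 * (d2 : ℝ) * (oA ^ 2 * ‖δx‖ ^ 2) + 2 * (d2 : ℝ) * (oA ^ 2 * ‖δy‖ ^ 2) := by
    have hpt : ∀ j, ((Fop A z - Fop A z') (Sum.inr j)) ^ 2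
        ≤ 2 * (ATmulX A δx j - ∑ k, Y' k * ATmulX A δx k) ^ 2 + 2 * (payoff A X δy) ^ 2 := by
      intro j; rw [hB2 j]
      nlinarith [sq_nonneg ((ATmulX A δx j - ∑ k, Y' k * ATmulX A δx k) + payoff A X δy)]
    calc ∑ j, ((Fop A z - Fop A z') (Sum.inr j)) ^ 2
        ≤ ∑ j, (2 * (ATmulX A δx j - ∑ k, Y' k * ATmulX A δx k) ^ 2
            + 2 * (payoff A X δy) ^ 2) := Finset.sum_le_sum fun j _ => hpt j
      _ = 2 * (∑ j, (ATmulX A δx j - ∑ k, Y' k * ATmulX A δx k) ^ 2)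
            + (d2 : ℝ) * (2 * (payoff A X δy) ^ 2) := by
          rw [Finset.sum_add_distrib, ← Finset.mul_sum, Finset.sum_const, Finset.card_univ,
            Fintype.card_fin, nsmul_eq_mul]
      _ ≤ 2 * ((d2 : ℝ) * (oA ^ 2 * ‖δx‖ ^ 2)) + (d2 : ℝ) * (2 * (oA ^ 2 * ‖δy‖ ^ 2)) := by
          have hd2' : (0 : ℝ) ≤ d2 := Nat.cast_nonneg d2
          have := k2b.trans (by nlinarith : (d2 : ℝ) * ‖ATmulX A δx‖ ^ 2
            ≤ (d2 : ℝ) * (oA ^ 2 * ‖δx‖ ^ 2))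
          nlinarith
      _ = 2 * (d2 : ℝ) * (oA ^ 2 * ‖δx‖ ^ 2) + 2 * (d2 : ℝ) * (oA ^ 2 * ‖δy‖ ^ 2) := by ring
  -- normalization lipschitz
  have hdx : ‖δx‖ ^ 2 ≤ (d1 : ℝ) * ‖xPart z - xPart z'‖ ^ 2 := normPart_lip hz.1 hz'.1
  have hdy : ‖δy‖ ^ 2 ≤ (d2 : ℝ) * ‖yPart z - yPart z'‖ ^ 2 := normPart_lip hz.2 hz'.2
  have hzz : ‖z - z'‖ ^ 2 = ‖xPart z - xPart z'‖ ^ 2 + ‖yPart z - yPart z'‖ ^ 2 := by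
    rw [normsq_joint]; rfl
  -- put everything together
  set m := max (d1 : ℝ) (d2 : ℝ) with hm
  have hm1 : (1 : ℝ) ≤ m := le_trans (by exact_mod_cast hd1) (le_max_left _ _)
  have hmd1 : (d1 : ℝ) ≤ m := le_max_left _ _
  have hmd2 : (d2 : ℝ) ≤ m := le_max_right _ _
  have hd10 : (0 : ℝ) ≤ d1 := Nat.cast_nonneg _
  have hd20 : (0 : ℝ) ≤ d2 := Nat.cast_nonneg _
  have ha2 : (0 : ℝ) ≤ ‖xPart z - xPart z'‖ ^ 2 := sq_nonneg _
  have hb2 : (0 : ℝ) ≤ ‖yPart z - yPart z'‖ ^ 2 := sq_nonneg _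
  have hm0 : (0 : ℝ) ≤ m := le_trans zero_le_one hm1
  have hdx0 : (0 : ℝ) ≤ ‖δx‖ ^ 2 := sq_nonneg _
  have hdy0 : (0 : ℝ) ≤ ‖δy‖ ^ 2 := sq_nonneg _
  have hsum2 : ‖δx‖ ^ 2 + ‖δy‖ ^ 2
      ≤ m * (‖xPart z - xPart z'‖ ^ 2 + ‖yPart z - yPart z'‖ ^ 2) := by
    have t1 : ‖δx‖ ^ 2 ≤ m * ‖xPart z - xPart z'‖ ^ 2 :=
      hdx.trans (mul_le_mul_of_nonneg_right hmd1 ha2)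
    have t2 : ‖δy‖ ^ 2 ≤ m * ‖yPart z - yPart z'‖ ^ 2 :=
      hdy.trans (mul_le_mul_of_nonneg_right hmd2 hb2)
    calc ‖δx‖ ^ 2 + ‖δy‖ ^ 2
        ≤ m * ‖xPart z - xPart z'‖ ^ 2 + m * ‖yPart z - yPart z'‖ ^ 2 := add_le_add t1 t2
      _ = m * (‖xPart z - xPart z'‖ ^ 2 + ‖yPart z - yPart z'‖ ^ 2) := by ring
  have hmain : ‖Fop A z - Fop A z'‖ ^ 2 ≤ 4 * m * oA ^ 2 * (‖δx‖ ^ 2 + ‖δy‖ ^ 2) := by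
    rw [hns]
    nlinarith [blk1, blk2,
      mul_le_mul_of_nonneg_right hmd1 (mul_nonneg (sq_nonneg oA) hdx0),
      mul_le_mul_of_nonneg_right hmd1 (mul_nonneg (sq_nonneg oA) hdy0),
      mul_le_mul_of_nonneg_right hmd2 (mul_nonneg (sq_nonneg oA) hdx0),
      mul_le_mul_of_nonneg_right hmd2 (mul_nonneg (sq_nonneg oA) hdy0)]
  have htot : ‖Fop A z - Fop A z'‖ ^ 2 ≤ (2 * m * oA) ^ 2 * ‖z - z'‖ ^ 2 := by
    rw [hzz]
    calc ‖Fop A z - Fop A z'‖ ^ 2 ≤ 4 * m * oA ^ 2 * (‖δx‖ ^ 2 + ‖δy‖ ^ 2) := hmain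
      _ ≤ 4 * m * oA ^ 2 * (m * (‖xPart z - xPart z'‖ ^ 2 + ‖yPart z - yPart z'‖ ^ 2)) :=
          mul_le_mul_of_nonneg_left hsum2
            (mul_nonneg (mul_nonneg (by norm_num) hm0) (sq_nonneg oA))
      _ = (2 * m * oA) ^ 2 * (‖xPart z - xPart z'‖ ^ 2 + ‖yPart z - yPart z'‖ ^ 2) := by ring
  have hLF : 2 * m * oA ≤ LF A := by
    rw [LF, ← hoA, ← hm]
    have h6 : (2 : ℝ) ≤ Real.sqrt 6 := by
      rw [show (2 : ℝ) = Real.sqrt 4 by rw [show (4:ℝ) = 2^2 by norm_num, Real.sqrt_sq]; norm_num]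
      exact Real.sqrt_le_sqrt (by norm_num)
    calc 2 * m * oA ≤ Real.sqrt 6 * m * oA :=
          mul_le_mul_of_nonneg_right (mul_le_mul_of_nonneg_right h6 hm0) hoA0
      _ = Real.sqrt 6 * oA * m := by ring
  have hm0' : (0 : ℝ) ≤ m := le_trans zero_le_one hm1
  have : ‖Fop A z - Fop A z'‖ ≤ (2 * m * oA) * ‖z - z'‖ := by
    refine le_of_pow_le_pow_left₀ two_ne_zero (by positivity) ?_
    calc ‖Fop A z - Fop A z'‖ ^ 2 ≤ (2 * m * oA) ^ 2 * ‖z - z'‖ ^ 2 := htot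
      _ = ((2 * m * oA) * ‖z - z'‖) ^ 2 := by ring
  exact this.trans (mul_le_mul_of_nonneg_right hLF (norm_nonneg _))

end ExProof

namespace ExProof

variable {d1 d2 d : ℕ}

/-! ### Projection onto a nonempty closed convex set -/

section proj
variable {E : Type*} [NormedAddCommGroup E] [InnerProductSpace ℝ E] [CompleteSpace E]
variable {S : Set E}

lemma projOn_exists (hne : S.Nonempty) (hc : IsClosed S) (hconv : Convex ℝ S) (u : E) :
    ∃ p ∈ S, ∀ q ∈ S, ‖u - p‖ ≤ ‖u - q‖ := by
  obtain ⟨v, hvS, hmin⟩ :=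
    exists_norm_eq_iInf_of_complete_convex hne (hc.isComplete) hconv u
  refine ⟨v, hvS, fun q hq => ?_⟩
  rw [hmin]
  haveI : Nonempty S := hne.to_subtype
  exact ciInf_le ⟨0, Set.forall_mem_range.2 fun _ => norm_nonneg _⟩ (⟨q, hq⟩ : S)

lemma projOn_spec (hne : S.Nonempty) (hc : IsClosed S) (hconv : Convex ℝ S) (u : E) :
    projOn S u ∈ S ∧ ∀ w ∈ S, ⟪u - projOn S u, w - projOn S u⟫ ≤ 0 := by
  have hex := projOn_exists hne hc hconv u
  have hpr : projOn S u = hex.choose := by rw [projOn, dif_pos hex]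
  obtain ⟨hmem, hmin⟩ := hex.choose_spec
  rw [hpr]
  refine ⟨hmem, ?_⟩
  haveI : Nonempty S := hne.to_subtype
  have heq : ‖u - hex.choose‖ = ⨅ w : S, ‖u - w‖ := by
    refine le_antisymm (le_ciInf fun w => hmin w w.2) ?_
    exact ciInf_le ⟨0, Set.forall_mem_range.2 fun _ => norm_nonneg _⟩ (⟨hex.choose, hmem⟩ : S)
  exact (norm_eq_iInf_iff_real_inner_le_zero hconv hmem).1 heq

lemma projOn_sq_le (hne : S.Nonempty) (hc : IsClosed S) (hconv : Convex ℝ S) (u : E)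
    {w : E} (hw : w ∈ S) :
    ‖projOn S u - w‖ ^ 2 ≤ ‖u - w‖ ^ 2 - ‖u - projOn S u‖ ^ 2 := by
  obtain ⟨hmem, hinner⟩ := projOn_spec hne hc hconv u
  set p := projOn S u
  have hsplit : u - w = (u - p) + (p - w) := by abel
  have hexp : ‖u - w‖ ^ 2 = ‖u - p‖ ^ 2 + 2 * ⟪u - p, p - w⟫ + ‖p - w‖ ^ 2 := by
    rw [hsplit]; exact norm_add_sq_real _ _
  have h1 : ⟪u - p, p - w⟫ = -⟪u - p, w - p⟫ := by
    rw [← inner_neg_right]; congr 1; abel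
  have h2 := hinner w hw
  nlinarith [hexp, h1, h2]

lemma projOn_nonexpansive (hne : S.Nonempty) (hc : IsClosed S) (hconv : Convex ℝ S)
    (u v : E) : ‖projOn S u - projOn S v‖ ≤ ‖u - v‖ := by
  obtain ⟨hmu, hiu⟩ := projOn_spec hne hc hconv u
  obtain ⟨hmv, hiv⟩ := projOn_spec hne hc hconv v
  set pu := projOn S u
  set pv := projOn S v
  have h1 : ⟪u - pu, pv - pu⟫ ≤ 0 := hiu pv hmv
  have h2 : ⟪v - pv, pu - pv⟫ ≤ 0 := hiv pu hmu
  have key : ‖pu - pv‖ ^ 2 ≤ ⟪u - v, pu - pv⟫ := by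
    have e1 : ⟪u - v, pu - pv⟫ - ‖pu - pv‖ ^ 2
        = ⟪(u - pu) - (v - pv), pu - pv⟫ := by
      rw [← real_inner_self_eq_norm_sq]
      simp only [inner_sub_left]
      ring
    have e2 : ⟪(u - pu) - (v - pv), pu - pv⟫ = -⟪u - pu, pv - pu⟫ - ⟪v - pv, pu - pv⟫ := by
      have hn : (pv - pu : E) = -(pu - pv) := by abel
      rw [inner_sub_left, hn, inner_neg_right]
      ring
    nlinarith [e1, e2, h1, h2]
  have h3 : ⟪u - v, pu - pv⟫ ≤ ‖u - v‖ * ‖pu - pv‖ := real_inner_le_norm _ _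
  rcases eq_or_lt_of_le (norm_nonneg (pu - pv)) with h | h
  · rw [← h]; exact norm_nonneg _
  · nlinarith

end proj

/-! ### The set Z_≥ is nonempty, closed and convex -/

lemma Zset_subset_Zge : Zset d1 d2 ⊆ ZgeSet d1 d2 := by
  intro z hz
  exact ⟨⟨hz.1.1, le_of_eq hz.1.2.symm⟩, ⟨hz.2.1, le_of_eq hz.2.2.symm⟩⟩

lemma Zge_convex : Convex ℝ (ZgeSet d1 d2) := by
  intro z hz z' hz' a b ha hb hab
  have happ : ∀ s, (a • z + b • z') s = a * z s + b * z' s := fun s => rfl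
  constructor
  · constructor
    · intro i
      rw [xPart_apply, happ]
      exact add_nonneg (mul_nonneg ha (hz.1.1 i)) (mul_nonneg hb (hz'.1.1 i))
    · have : ∑ i, (a • z + b • z') (Sum.inl i)
          = a * (∑ i, z (Sum.inl i)) + b * ∑ i, z' (Sum.inl i) := by
        rw [Finset.mul_sum, Finset.mul_sum, ← Finset.sum_add_distrib]
        exact Finset.sum_congr rfl fun i _ => happ _
      show 1 ≤ ∑ i, (a • z + b • z') (Sum.inl i)
      rw [this]
      have h1 := hz.1.2; have h2 := hz'.1.2
      have h1' : 1 ≤ ∑ i, z (Sum.inl i) := h1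
      have h2' : 1 ≤ ∑ i, z' (Sum.inl i) := h2
      nlinarith
  · constructor
    · intro j
      rw [yPart_apply, happ]
      exact add_nonneg (mul_nonneg ha (hz.2.1 j)) (mul_nonneg hb (hz'.2.1 j))
    · have : ∑ j, (a • z + b • z') (Sum.inr j)
          = a * (∑ j, z (Sum.inr j)) + b * ∑ j, z' (Sum.inr j) := by
        rw [Finset.mul_sum, Finset.mul_sum, ← Finset.sum_add_distrib]
        exact Finset.sum_congr rfl fun j _ => happ _
      show 1 ≤ ∑ j, (a • z + b • z') (Sum.inr j)
      rw [this]
      have h1' : 1 ≤ ∑ j, z (Sum.inr j) := hz.2.2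
      have h2' : 1 ≤ ∑ j, z' (Sum.inr j) := hz'.2.2
      nlinarith

lemma Zge_closed : IsClosed (ZgeSet d1 d2) := by
  have hcont : ∀ s : Fin d1 ⊕ Fin d2, Continuous (fun z : Joint d1 d2 => z s) :=
    fun s => (PiLp.proj (𝕜 := ℝ) 2 (fun _ : Fin d1 ⊕ Fin d2 => ℝ) s).continuous
  have h1 : IsClosed {z : Joint d1 d2 | ∀ i, 0 ≤ z (Sum.inl i)} := by
    have : {z : Joint d1 d2 | ∀ i, 0 ≤ z (Sum.inl i)}
        = ⋂ i, {z : Joint d1 d2 | 0 ≤ z (Sum.inl i)} := by ext; simp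
    rw [this]
    exact isClosed_iInter fun i => isClosed_le continuous_const (hcont _)
  have h2 : IsClosed {z : Joint d1 d2 | ∀ j, 0 ≤ z (Sum.inr j)} := by
    have : {z : Joint d1 d2 | ∀ j, 0 ≤ z (Sum.inr j)}
        = ⋂ j, {z : Joint d1 d2 | 0 ≤ z (Sum.inr j)} := by ext; simp
    rw [this]
    exact isClosed_iInter fun j => isClosed_le continuous_const (hcont _)
  have h3 : IsClosed {z : Joint d1 d2 | 1 ≤ ∑ i, z (Sum.inl i)} :=
    isClosed_le continuous_const (continuous_finset_sum _ fun i _ => hcont _)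
  have h4 : IsClosed {z : Joint d1 d2 | 1 ≤ ∑ j, z (Sum.inr j)} :=
    isClosed_le continuous_const (continuous_finset_sum _ fun j _ => hcont _)
  have : ZgeSet d1 d2 = ({z : Joint d1 d2 | ∀ i, 0 ≤ z (Sum.inl i)}
      ∩ {z : Joint d1 d2 | 1 ≤ ∑ i, z (Sum.inl i)})
      ∩ ({z : Joint d1 d2 | ∀ j, 0 ≤ z (Sum.inr j)}
      ∩ {z : Joint d1 d2 | 1 ≤ ∑ j, z (Sum.inr j)}) := by
    ext z
    constructor
    · exact fun hz => ⟨⟨hz.1.1, hz.1.2⟩, ⟨hz.2.1, hz.2.2⟩⟩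
    · exact fun hz => ⟨⟨hz.1.1, hz.1.2⟩, ⟨hz.2.1, hz.2.2⟩⟩
  rw [this]
  exact ((h1.inter h3).inter (h2.inter h4))

end ExProof

namespace ExProof

variable {d1 d2 d : ℕ}

/-! ### inner products with Fop -/

lemma inner_Fop (A : Matrix (Fin d1) (Fin d2) ℝ) (z w : Joint d1 d2) :
    ⟪Fop A z, w⟫ = payoff A (xPart w) (normPart (yPart z))
      - payoff A (normPart (xPart z)) (yPart w)
      + payoff A (normPart (xPart z)) (normPart (yPart z))
        * ((∑ j, yPart w j) - ∑ i, xPart w i) := by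
  set X := normPart (xPart z)
  set Y := normPart (yPart z)
  set C := payoff A X Y with hC
  rw [inner_joint]
  have hx : ∀ i, xPart (Fop A z) i * xPart w i
      = xPart w i * (∑ j, A i j * Y j) - C * xPart w i := by
    intro i
    rw [xPart_apply, Fop_inl]
    ring
  have hy : ∀ j, yPart (Fop A z) j * yPart w j
      = C * yPart w j - yPart w j * (∑ i, A i j * X i) := by
    intro j
    rw [yPart_apply, Fop_inr]
    ring
  rw [Finset.sum_congr rfl fun i _ => hx i, Finset.sum_congr rfl fun j _ => hy j,
    Finset.sum_sub_distrib, Finset.sum_sub_distrib,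
    ← Finset.mul_sum, ← Finset.mul_sum, ← payoff_eq_left, ← payoff_eq_right]
  ring

lemma inner_Fop_self (A : Matrix (Fin d1) (Fin d2) ℝ) {z : Joint d1 d2}
    (hz : z ∈ ZgeSet d1 d2) : ⟪Fop A z, z⟫ = 0 := by
  rw [inner_Fop]
  have h1 : payoff A (xPart z) (normPart (yPart z))
      = (∑ i, xPart z i) * payoff A (normPart (xPart z)) (normPart (yPart z)) := by
    conv_lhs => rw [← smul_normPart hz.1]
    rw [payoff_smul_left]
  have h2 : payoff A (normPart (xPart z)) (yPart z)
      = (∑ j, yPart z j) * payoff A (normPart (xPart z)) (normPart (yPart z)) := by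
    conv_lhs => rw [← smul_normPart hz.2]
    rw [payoff_smul_right]
  rw [h1, h2]
  ring

/-! ### the simplex is compact, convex, nonempty -/

lemma simplex_convex : Convex ℝ (simplexSet d) := by
  intro x hx x' hx' a b ha hb hab
  have happ : ∀ i, (a • x + b • x') i = a * x i + b * x' i := fun i => rfl
  constructor
  · intro i
    rw [happ]
    exact add_nonneg (mul_nonneg ha (hx.1 i)) (mul_nonneg hb (hx'.1 i))
  · rw [Finset.sum_congr rfl fun i _ => happ i, Finset.sum_add_distrib,
      ← Finset.mul_sum, ← Finset.mul_sum, hx.2, hx'.2]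
    linarith

lemma simplex_closed : IsClosed (simplexSet d) := by
  have hcont : ∀ i : Fin d, Continuous (fun x : Vec d => x i) :=
    fun i => (PiLp.proj (𝕜 := ℝ) 2 (fun _ : Fin d => ℝ) i).continuous
  have h1 : IsClosed {x : Vec d | ∀ i, 0 ≤ x i} := by
    have : {x : Vec d | ∀ i, 0 ≤ x i} = ⋂ i, {x : Vec d | 0 ≤ x i} := by ext; simp
    rw [this]
    exact isClosed_iInter fun i => isClosed_le continuous_const (hcont i)
  have h2 : IsClosed {x : Vec d | ∑ i, x i = 1} :=
    isClosed_eq (continuous_finset_sum _ fun i _ => hcont i) continuous_const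
  exact h1.inter h2

lemma simplex_compact : IsCompact (simplexSet d) := by
  refine Metric.isCompact_of_isClosed_isBounded simplex_closed ?_
  refine (Metric.isBounded_closedBall (x := (0 : Vec d)) (r := 1)).subset fun x hx => ?_
  rw [Metric.mem_closedBall, dist_zero_right]
  exact norm_le_one_of_simplex hx

lemma uniform_mem_simplex (hd : 1 ≤ d) : (WithLp.toLp 2 (fun _ => (d : ℝ)⁻¹) : Vec d) ∈ simplexSet d := by
  have hd0 : (0 : ℝ) < d := by exact_mod_cast hd
  constructor
  · intro i; positivity
  · rw [Finset.sum_const, Finset.card_univ, Fintype.card_fin, nsmul_eq_mul,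
      mul_inv_cancel₀ hd0.ne']

lemma single_mem_simplex (i : Fin d) : (EuclideanSpace.single i (1:ℝ) : Vec d) ∈ simplexSet d := by
  constructor
  · intro k
    rw [EuclideanSpace.single_apply]
    split <;> norm_num
  · rw [Finset.sum_congr rfl fun k _ => EuclideanSpace.single_apply i 1 k]
    simp

/-! ### decomposition of linear functionals -/

lemma vec_decomp (w : Vec d) : w = ∑ i, w i • (EuclideanSpace.single i (1:ℝ) : Vec d) := by
  have h := (EuclideanSpace.basisFun (Fin d) ℝ).toBasis.sum_repr w
  conv_lhs => rw [← h]
  refine Finset.sum_congr rfl fun i _ => ?_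
  simp [OrthonormalBasis.coe_toBasis_repr_apply, OrthonormalBasis.coe_toBasis,
    EuclideanSpace.basisFun_repr, EuclideanSpace.basisFun_apply]

lemma clm_apply_eq (f : Vec d →L[ℝ] ℝ) (w : Vec d) :
    f w = ∑ i, w i * f (EuclideanSpace.single i 1) := by
  conv_lhs => rw [vec_decomp w]
  rw [map_sum]
  exact Finset.sum_congr rfl fun i _ => by rw [map_smul]; rfl

end ExProof

namespace ExProof

variable {d1 d2 d : ℕ}

lemma unbdd_contra {a b c : ℝ} (hc : 0 < c) (h : ∀ t : ℝ, 0 < t → a + t * c < b) : False := by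
  have hab : a + c < b := by simpa using h 1 one_pos
  have ht : 0 < (b - a) / c + 1 := by
    have h1 : 0 < (b - a) / c := div_pos (by linarith) hc
    linarith
  have h2 := h _ ht
  have h3 : ((b - a) / c + 1) * c = (b - a) + c := by field_simp
  nlinarith

lemma exists_saddle (hd1 : 1 ≤ d1) (hd2 : 1 ≤ d2) (A : Matrix (Fin d1) (Fin d2) ℝ) :
    ∃ xs ∈ simplexSet d1, ∃ ys ∈ simplexSet d2,
      ∀ x ∈ simplexSet d1, ∀ y ∈ simplexSet d2, payoff A xs y ≤ payoff A x ys := by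
  haveI ne1 : Nonempty (Fin d1) := ⟨⟨0, hd1⟩⟩
  haveI ne2 : Nonempty (Fin d2) := ⟨⟨0, hd2⟩⟩
  have hcoord1 : ∀ i : Fin d1, Continuous (fun u : Vec d1 => u i) :=
    fun i => (PiLp.proj (𝕜 := ℝ) 2 (fun _ : Fin d1 => ℝ) i).continuous
  have hcoord2 : ∀ j : Fin d2, Continuous (fun y : Vec d2 => y j) :=
    fun j => (PiLp.proj (𝕜 := ℝ) 2 (fun _ : Fin d2 => ℝ) j).continuous
  set φ : Vec d2 → ℝ :=
    fun y => Finset.univ.inf' Finset.univ_nonempty (fun i => ∑ j, A i j * y j) with hφ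
  have hφc : Continuous φ := by
    refine Continuous.finset_inf'_apply Finset.univ_nonempty fun i _ => ?_
    exact continuous_finset_sum _ fun j _ => continuous_const.mul (hcoord2 j)
  obtain ⟨ys, hys, hmax⟩ := simplex_compact.exists_isMaxOn
    ⟨_, uniform_mem_simplex hd2⟩ hφc.continuousOn
  set v := φ ys with hv
  -- property of ys
  have hyprop : ∀ x ∈ simplexSet d1, v ≤ payoff A x ys := by
    intro x hx
    rw [payoff_eq_left]
    have h1 : ∀ i, x i * v ≤ x i * ∑ j, A i j * ys j := fun i =>
      mul_le_mul_of_nonneg_left (Finset.inf'_le _ (Finset.mem_univ i)) (hx.1 i)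
    calc v = ∑ i, x i * v := by rw [← Finset.sum_mul, hx.2, one_mul]
      _ ≤ ∑ i, x i * ∑ j, A i j * ys j := Finset.sum_le_sum fun i _ => h1 i
  -- separation setup
  set s : Set (Vec d1) := ⋂ i, {u : Vec d1 | v < u i} with hs
  have hsopen : IsOpen s :=
    isOpen_iInter_of_finite fun i => isOpen_lt continuous_const (hcoord1 i)
  have hsconv : Convex ℝ s :=
    convex_iInter fun i => by
      have : {u : Vec d1 | v < u i} = (fun u : Vec d1 => u i) ⁻¹' (Set.Ioi v) := rfl
      rw [this]
      exact (convex_Ioi v).is_linear_preimage ⟨fun u u' => rfl, fun c u => rfl⟩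
  set tset : Set (Vec d1) := (fun y => AmulY A y) '' simplexSet d2 with ht
  have htconv : Convex ℝ tset := by
    refine simplex_convex.is_linear_image ⟨fun y y' => ?_, fun c y => ?_⟩
    · ext i
      rw [AmulY_apply]
      show _ = AmulY A y i + AmulY A y' i
      rw [AmulY_apply, AmulY_apply, ← Finset.sum_add_distrib]
      exact Finset.sum_congr rfl fun j _ => by
        show A i j * (y j + y' j) = _
        ring
    · ext i
      show AmulY A (c • y) i = (c • AmulY A y) i
      rw [AmulY_apply]
      show _ = c * AmulY A y i
      rw [AmulY_apply, Finset.mul_sum]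
      exact Finset.sum_congr rfl fun j _ => by
        show A i j * (c * y j) = _
        ring
  have hdisj : Disjoint s tset := by
    rw [Set.disjoint_left]
    rintro u hu ⟨y, hy, rfl⟩
    have h1 : v < φ y := by
      rw [hφ]
      refine (Finset.lt_inf'_iff _).2 fun i _ => ?_
      have := Set.mem_iInter.1 hu i
      exact this
    have h2 : φ y ≤ v := hmax hy
    linarith
  obtain ⟨f, α, hfs, hft⟩ := geometric_hahn_banach_open hsconv hsopen htconv hdisj
  -- basic points
  set ones : Vec d1 := WithLp.toLp 2 (fun _ => (1 : ℝ)) with hones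
  have hmemones : ∀ c : ℝ, 0 < c → ((WithLp.toLp 2 (fun _ => v + c) : Vec d1)) ∈ s := by
    intro c hc
    refine Set.mem_iInter.2 fun i => ?_
    show v < v + c
    linarith
  -- f is nonpositive on coordinates
  have hfe : ∀ i, f (EuclideanSpace.single i 1) ≤ 0 := by
    intro i
    by_contra hpos
    push_neg at hpos
    set u0 : Vec d1 := WithLp.toLp 2 (fun _ => v + 1) with hu0
    have hu0s : u0 ∈ s := hmemones 1 one_pos
    refine unbdd_contra (a := f u0) (b := α) hpos fun t ht => ?_
    set w : Vec d1 := u0 + t • (EuclideanSpace.single i (1:ℝ) : Vec d1) with hwdef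
    have hmem : w ∈ s := by
      refine Set.mem_iInter.2 fun k => ?_
      show v < w k
      have happ : w k = (v + 1) + t * (EuclideanSpace.single i (1:ℝ) : Vec d1) k := rfl
      rw [happ, EuclideanSpace.single_apply]
      split
      · linarith
      · linarith
    have hlt := hfs _ hmem
    rw [hwdef, map_add, map_smul, smul_eq_mul] at hlt
    exact hlt
  have hfones : f ones = ∑ i, f (EuclideanSpace.single i 1) := by
    rw [clm_apply_eq]
    exact Finset.sum_congr rfl fun i _ => by rw [hones]; show 1 * _ = _; ring
  have hfones0 : f ones ≤ 0 := by
    rw [hfones]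
    exact Finset.sum_nonpos fun i _ => hfe i
  -- v * f ones ≤ α
  have hva : v * f ones ≤ α := by
    by_contra hlt
    push_neg at hlt
    set c := |f ones| with hc
    have hc0 : 0 ≤ c := abs_nonneg _
    have hcf : -c ≤ f ones := neg_abs_le _
    set ε := (v * f ones - α) / (c + 1) with he
    have hε : 0 < ε := div_pos (by linarith) (by linarith)
    have h1 : ε * (c + 1) = v * f ones - α := by
      rw [he]; field_simp
    have h2 : ε * (-c) ≤ ε * f ones := mul_le_mul_of_nonneg_left hcf hε.le
    have h3 : f (WithLp.toLp 2 (fun _ => v + ε) : Vec d1) < α := hfs _ (hmemones ε hε)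
    have h4 : f (WithLp.toLp 2 (fun _ => v + ε) : Vec d1) = (v + ε) * f ones := by
      have : (WithLp.toLp 2 (fun _ => v + ε) : Vec d1) = (v + ε) • ones := by
        ext k
        show v + ε = (v + ε) * 1
        ring
      rw [this, map_smul, smul_eq_mul]
    rw [h4] at h3
    nlinarith
  -- construct xs
  set g : Vec d1 := WithLp.toLp 2 (fun i => -(f (EuclideanSpace.single i 1))) with hg
  have hg0 : ∀ i, 0 ≤ g i := fun i => neg_nonneg.2 (hfe i)
  set Sg := ∑ i, g i with hSg
  have hSgf : Sg = -(f ones) := by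
    rw [hSg, hfones, ← Finset.sum_neg_distrib]
  have hSg0 : 0 ≤ Sg := Finset.sum_nonneg fun i _ => hg0 i
  have hSgpos : 0 < Sg := by
    rcases eq_or_lt_of_le hSg0 with h | h
    · exfalso
      have hallz : ∀ i, g i = 0 := by
        intro i
        have := Finset.sum_eq_zero_iff_of_nonneg (fun i _ => hg0 i) |>.1 h.symm
        exact this i (Finset.mem_univ i)
      have hf0 : ∀ w : Vec d1, f w = 0 := by
        intro w
        rw [clm_apply_eq]
        refine Finset.sum_eq_zero fun i _ => ?_
        have : f (EuclideanSpace.single i 1) = 0 := by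
          have h' := hallz i
          rw [show g i = -(f (EuclideanSpace.single i 1)) from rfl] at h'
          linarith
        rw [this, mul_zero]
      have h1 : (0:ℝ) < α := by
        have := hfs _ (hmemones 1 one_pos)
        rw [hf0] at this
        exact this
      have h2 : α ≤ 0 := by
        have hmem : AmulY A ys ∈ tset := ⟨ys, hys, rfl⟩
        have := hft _ hmem
        rw [hf0] at this
        exact this
      linarith
    · exact h
  set xs : Vec d1 := Sg⁻¹ • g with hxs
  have hxss : xs ∈ simplexSet d1 := by
    constructor
    · intro i
      show 0 ≤ Sg⁻¹ * g i
      exact mul_nonneg (inv_nonneg.2 hSg0) (hg0 i)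
    · show ∑ i, xs i = 1
      calc ∑ i, xs i = ∑ i, Sg⁻¹ * g i := Finset.sum_congr rfl fun i _ => rfl
        _ = Sg⁻¹ * ∑ i, g i := (Finset.mul_sum _ _ _).symm
        _ = 1 := by rw [← hSg, inv_mul_cancel₀ hSgpos.ne']
  -- property of xs
  have hxprop : ∀ y ∈ simplexSet d2, payoff A xs y ≤ v := by
    intro y hy
    have hmem : AmulY A y ∈ tset := ⟨y, hy, rfl⟩
    have h1 : α ≤ f (AmulY A y) := hft _ hmem
    have h2 : f (AmulY A y) = -∑ i, AmulY A y i * g i := by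
      rw [clm_apply_eq, ← Finset.sum_neg_distrib]
      exact Finset.sum_congr rfl fun i _ => by rw [hg]; ring
    have h3 : payoff A xs y = Sg⁻¹ * ∑ i, AmulY A y i * g i := by
      rw [payoff_eq_left, Finset.mul_sum]
      exact Finset.sum_congr rfl fun i _ => by
        show xs i * ∑ j, A i j * y j = _
        rw [show xs i = Sg⁻¹ * g i from rfl, ← AmulY_apply]
        ring
    have h4 : ∑ i, AmulY A y i * g i ≤ -α := by
      have := h1
      rw [h2] at this
      linarith
    have h5 : -α ≤ v * Sg := by
      rw [hSgf]
      linarith [hva]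
    calc payoff A xs y = Sg⁻¹ * ∑ i, AmulY A y i * g i := h3
      _ ≤ Sg⁻¹ * (v * Sg) := by
          refine mul_le_mul_of_nonneg_left (h4.trans h5) (inv_nonneg.2 hSg0)
      _ = v := by field_simp
  exact ⟨xs, hxss, ys, hys, fun x hx y hy => (hxprop y hy).trans (hyprop x hx)⟩

end ExProof

namespace ExProof

variable {d1 d2 d : ℕ}

lemma LF_nonneg (A : Matrix (Fin d1) (Fin d2) ℝ) : 0 ≤ LF A := by
  rw [LF]
  have h1 : (0:ℝ) ≤ Real.sqrt 6 := Real.sqrt_nonneg _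
  have h2 := opNorm_nonneg A
  have h3 : (0:ℝ) ≤ max (d1 : ℝ) (d2 : ℝ) := le_trans (Nat.cast_nonneg d1) (le_max_left _ _)
  positivity

set_option maxHeartbeats 2000000 in
lemma step_ineq (hd1 : 1 ≤ d1) (hd2 : 1 ≤ d2) {A : Matrix (Fin d1) (Fin d2) ℝ} {η : ℝ}
    (hη0 : 0 ≤ η) {z zh z1 q : Joint d1 d2}
    (hz : z ∈ ZgeSet d1 d2) (hq : q ∈ ZgeSet d1 d2)
    (hne : (ZgeSet d1 d2).Nonempty)
    (hzh : zh = projOn (ZgeSet d1 d2) (z - η • Fop A z))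
    (hz1 : z1 = projOn (ZgeSet d1 d2) (z - η • Fop A zh))
    (hmono : 0 ≤ ⟪Fop A zh, zh - q⟫) :
    ‖z1 - q‖ ^ 2 ≤ ‖z - q‖ ^ 2
      - (1 - η * LF A) * (‖z - zh‖ ^ 2 + ‖zh - z1‖ ^ 2) := by
  have hcl : IsClosed (ZgeSet d1 d2) := Zge_closed
  have hcv : Convex ℝ (ZgeSet d1 d2) := Zge_convex
  set f0 := Fop A z with hf0
  set fh := Fop A zh with hfh
  have hzhK : zh ∈ ZgeSet d1 d2 := by
    rw [hzh]; exact (projOn_spec hne hcl hcv _).1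
  have hz1K : z1 ∈ ZgeSet d1 d2 := by
    rw [hz1]; exact (projOn_spec hne hcl hcv _).1
  -- expansion helper
  have hexp : ∀ u w : Joint d1 d2, ‖u - η • w‖ ^ 2
      = ‖u‖ ^ 2 - 2 * η * ⟪u, w⟫ + η ^ 2 * ‖w‖ ^ 2 := by
    intro u w
    rw [norm_sub_sq_real, real_inner_smul_right, norm_smul]
    simp [mul_pow, sq_abs]
    ring
  set a1 := ⟪fh, z1 - zh⟫ with ha1
  set a2 := ⟪fh, zh - q⟫ with ha2
  set b := ⟪z - zh, z1 - zh⟫ with hb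
  set c := ⟪f0, z1 - zh⟫ with hc
  set e := ⟪f0 - fh, z1 - zh⟫ with he
  -- projection inequality at z1
  have P1 : ‖z1 - q‖ ^ 2 ≤ ‖(z - η • fh) - q‖ ^ 2 - ‖(z - η • fh) - z1‖ ^ 2 := by
    rw [hz1]
    exact projOn_sq_le hne hcl hcv _ hq
  have key1 : ‖(z - η • fh) - q‖ ^ 2 - ‖(z - η • fh) - z1‖ ^ 2
      = ‖z - q‖ ^ 2 - ‖z - z1‖ ^ 2 - 2 * η * (a1 + a2) := by
    rw [show (z - η • fh) - q = (z - q) - η • fh from by abel,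
      show (z - η • fh) - z1 = (z - z1) - η • fh from by abel, hexp, hexp]
    have hinner : ⟪z - q, fh⟫ - ⟪z - z1, fh⟫ = a1 + a2 := by
      rw [← inner_sub_left, show (z - q) - (z - z1) = (z1 - zh) + (zh - q) from by abel,
        inner_add_left, ha1, ha2, real_inner_comm fh (z1 - zh), real_inner_comm fh (zh - q)]
    nlinarith [hinner]
  -- norm splitting
  have hsplit : ‖z - z1‖ ^ 2 = ‖z - zh‖ ^ 2 + 2 * (-b) + ‖zh - z1‖ ^ 2 := by
    rw [show z - z1 = (z - zh) + (zh - z1) from by abel, norm_add_sq_real]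
    have : ⟪z - zh, zh - z1⟫ = -b := by
      rw [hb, ← inner_neg_right]
      congr 1
      abel
    rw [this]
  -- projection inequality at zh
  have P2 : b - η * c ≤ 0 := by
    have h0 := (projOn_spec hne hcl hcv (z - η • f0)).2 z1 hz1K
    rw [← hzh] at h0
    have h1 : (z - η • f0) - zh = (z - zh) - η • f0 := by abel
    rw [h1, inner_sub_left, real_inner_smul_left] at h0
    rw [hb, hc]
    have h2 : ⟪f0, z1 - zh⟫ = ⟪z1 - zh, f0⟫ := real_inner_comm _ _
    linarith [h0, h2.ge, h2.le]
  -- Lipschitz bound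
  have hFl : ‖f0 - fh‖ ≤ LF A * ‖z - zh‖ := Fop_lip hd1 hd2 hz hzhK
  have hEl : e ≤ LF A * (‖z - zh‖ * ‖zh - z1‖) := by
    calc e ≤ ‖f0 - fh‖ * ‖z1 - zh‖ := real_inner_le_norm _ _
      _ ≤ (LF A * ‖z - zh‖) * ‖z1 - zh‖ :=
          mul_le_mul_of_nonneg_right hFl (norm_nonneg _)
      _ = LF A * (‖z - zh‖ * ‖zh - z1‖) := by rw [norm_sub_rev z1 zh]; ring
  have hLA0 : 0 ≤ LF A := LF_nonneg A
  have h7 : η * e ≤ η * (LF A * (‖z - zh‖ * ‖zh - z1‖)) :=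
    mul_le_mul_of_nonneg_left hEl hη0
  have ham : ‖z - zh‖ * ‖zh - z1‖ ≤ (‖z - zh‖ ^ 2 + ‖zh - z1‖ ^ 2) / 2 := by
    nlinarith [sq_nonneg (‖z - zh‖ - ‖zh - z1‖)]
  have h8 : η * (LF A * (‖z - zh‖ * ‖zh - z1‖))
      ≤ η * (LF A * ((‖z - zh‖ ^ 2 + ‖zh - z1‖ ^ 2) / 2)) :=
    mul_le_mul_of_nonneg_left (mul_le_mul_of_nonneg_left ham hLA0) hη0
  have he' : η * e = η * c - η * a1 := by
    rw [he, inner_sub_left, ← hc, ← ha1]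
    ring
  have hma2 : 0 ≤ η * a2 := mul_nonneg hη0 hmono
  linarith [P1, key1, hsplit, P2, h7, h8, he', hma2]

end ExProof

namespace ExProof

variable {d1 d2 d : ℕ}

lemma payoff_single_left (A : Matrix (Fin d1) (Fin d2) ℝ) (i : Fin d1) (y : Vec d2) :
    payoff A (EuclideanSpace.single i (1:ℝ)) y = ∑ j, A i j * y j := by
  rw [payoff_eq_left]
  rw [Finset.sum_eq_single i]
  · rw [EuclideanSpace.single_apply, if_pos rfl, one_mul]
  · intro k _ hk
    rw [EuclideanSpace.single_apply, if_neg hk, zero_mul]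
  · intro h
    exact absurd (Finset.mem_univ i) h

lemma payoff_single_right (A : Matrix (Fin d1) (Fin d2) ℝ) (x : Vec d1) (j : Fin d2) :
    payoff A x (EuclideanSpace.single j (1:ℝ)) = ∑ i, A i j * x i := by
  rw [payoff_eq_right]
  rw [Finset.sum_eq_single j]
  · rw [EuclideanSpace.single_apply, if_pos rfl, one_mul]
  · intro k _ hk
    rw [EuclideanSpace.single_apply, if_neg hk, zero_mul]
  · intro h
    exact absurd (Finset.mem_univ j) h

lemma sum_smul_part (c : ℝ) (x : Vec d) : ∑ i, (c • x) i = c * ∑ i, x i := by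
  rw [Finset.mul_sum]
  exact Finset.sum_congr rfl fun i _ => rfl

end ExProof

open ExProof in
/-- If ExRM⁺ has a limit point colinear with a pair of strategies, then the
whole sequence converges to it. -/
theorem exrmp_colinear_limit_point_converges {d1 d2 : ℕ} (hd1 : 1 ≤ d1) (hd2 : 1 ≤ d2)
    (A : Matrix (Fin d1) (Fin d2) ℝ) (η : ℝ) (hη0 : 0 < η) (hη1 : η < 1 / LF A)
    (z zh : ℕ → Joint d1 d2) (hEx : ExRM A η z zh)
    (p : Joint d1 d2) (zs : Joint d1 d2) (hzs : zs ∈ Zset d1 d2)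
    (a : ℝ) (ha : 1 ≤ a) (hp : p = a • zs)
    (hlim : IsLimitPoint z p) :
    Tendsto z atTop (𝓝 p) := by
  obtain ⟨hz0, hzhdef, hzdef⟩ := hEx
  have hne : (ZgeSet d1 d2).Nonempty := ⟨zs, Zset_subset_Zge hzs⟩
  have hcl : IsClosed (ZgeSet d1 d2) := Zge_closed
  have hcv : Convex ℝ (ZgeSet d1 d2) := Zge_convex
  -- step size facts
  have hLF0 : 0 < LF A := by
    rcases lt_or_ge 0 (LF A) with h | h
    · exact h
    · exfalso
      have : 1 / LF A ≤ 0 := one_div_nonpos.2 h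
      linarith
  have hηL1 : η * LF A < 1 := (lt_div_iff₀ hLF0).1 hη1
  have hcoef : 0 < 1 - η * LF A := by linarith
  -- iterates stay in Z≥
  have hzK : ∀ t, z t ∈ ZgeSet d1 d2 := by
    intro t
    cases t with
    | zero => exact Zset_subset_Zge hz0
    | succ s => rw [hzdef s]; exact (projOn_spec hne hcl hcv _).1
  have hzhK : ∀ t, zh t ∈ ZgeSet d1 d2 := by
    intro t
    rw [hzhdef t]
    exact (projOn_spec hne hcl hcv _).1
  -- a Nash pair
  obtain ⟨xs, hxs, ys, hys, hsaddle⟩ := exists_saddle hd1 hd2 A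
  have hq0 : joinPt xs ys ∈ ZgeSet d1 d2 := Zset_subset_Zge ⟨hxs, hys⟩
  have hmono0 : ∀ w ∈ ZgeSet d1 d2, 0 ≤ ⟪Fop A w, w - joinPt xs ys⟫ := by
    intro w hw
    rw [inner_sub_right, inner_Fop_self A hw]
    have h2 : ⟪Fop A w, joinPt xs ys⟫
        = payoff A xs (normPart (yPart w)) - payoff A (normPart (xPart w)) ys
          + payoff A (normPart (xPart w)) (normPart (yPart w)) * (1 - 1) := by
      rw [inner_Fop A w (joinPt xs ys)]
      have e1 : xPart (joinPt xs ys) = xs := rfl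
      have e2 : yPart (joinPt xs ys) = ys := rfl
      rw [e1, e2, hxs.2, hys.2]
    have h3 := hsaddle (normPart (xPart w)) (normPart_mem_simplex hw.1)
      (normPart (yPart w)) (normPart_mem_simplex hw.2)
    rw [h2]
    linarith
  -- squared-distance decrease wrt the Nash point
  set D : ℕ → ℝ := fun t => ‖z t - zh t‖ ^ 2 + ‖zh t - z (t + 1)‖ ^ 2 with hD
  have hDnn : ∀ t, 0 ≤ D t := fun t => add_nonneg (sq_nonneg _) (sq_nonneg _)
  have hstep0 : ∀ t, ‖z (t + 1) - joinPt xs ys‖ ^ 2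
      ≤ ‖z t - joinPt xs ys‖ ^ 2 - (1 - η * LF A) * D t := fun t =>
    step_ineq hd1 hd2 hη0.le (hzK t) hq0 hne (hzhdef t) (hzdef t) (hmono0 (zh t) (hzhK t))
  -- the D t are summable, hence tend to 0
  have hpartial : ∀ T : ℕ, ∑ t ∈ Finset.range T, D t
      ≤ ‖z 0 - joinPt xs ys‖ ^ 2 / (1 - η * LF A) := by
    intro T
    have h1 : ∑ t ∈ Finset.range T, (1 - η * LF A) * D t
        ≤ ∑ t ∈ Finset.range T,
            (‖z t - joinPt xs ys‖ ^ 2 - ‖z (t + 1) - joinPt xs ys‖ ^ 2) :=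
      Finset.sum_le_sum fun t _ => by linarith [hstep0 t]
    rw [Finset.sum_range_sub' (fun t => ‖z t - joinPt xs ys‖ ^ 2)] at h1
    rw [← Finset.mul_sum] at h1
    rw [le_div_iff₀ hcoef]
    nlinarith [sq_nonneg ‖z T - joinPt xs ys‖]
  have hsummable : Summable D := summable_of_sum_range_le hDnn hpartial
  have hD0 : Tendsto D atTop (𝓝 0) := hsummable.tendsto_atTop_zero
  -- hence ‖z t - zh t‖ → 0
  have hdiff : Tendsto (fun t => ‖z t - zh t‖) atTop (𝓝 0) := by
    have hb : ∀ t, ‖z t - zh t‖ ≤ Real.sqrt (D t) := by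
      intro t
      rw [show ‖z t - zh t‖ = Real.sqrt (‖z t - zh t‖ ^ 2) by
        rw [Real.sqrt_sq (norm_nonneg _)]]
      exact Real.sqrt_le_sqrt (le_add_of_nonneg_right (sq_nonneg _))
    have hsq : Tendsto (fun t => Real.sqrt (D t)) atTop (𝓝 0) := by
      have := (Real.continuous_sqrt.tendsto 0).comp hD0
      simpa [Function.comp_def] using this
    exact squeeze_zero (fun t => norm_nonneg _) hb hsq
  -- the limit point
  obtain ⟨φa, hφmono, hφlim⟩ := hlim
  have hnorm0 : Tendsto (fun n => ‖z (φa n) - p‖) atTop (𝓝 0) := by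
    have := tendsto_iff_dist_tendsto_zero.mp hφlim
    simpa [dist_eq_norm] using this
  -- p belongs to Z≥
  have ha0 : (0:ℝ) < a := lt_of_lt_of_le one_pos ha
  have hxp : xPart p = a • xPart zs := by rw [hp]; rfl
  have hyp : yPart p = a • yPart zs := by rw [hp]; rfl
  have hpK : p ∈ ZgeSet d1 d2 := by
    constructor
    · constructor
      · intro i
        rw [hxp]
        exact mul_nonneg ha0.le (hzs.1.1 i)
      · rw [hxp, sum_smul_part, hzs.1.2, mul_one]
        exact ha
    · constructor
      · intro j
        rw [hyp]
        exact mul_nonneg ha0.le (hzs.2.1 j)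
      · rw [hyp, sum_smul_part, hzs.2.2, mul_one]
        exact ha
  have hnx : normPart (xPart p) = xPart zs := by
    rw [hxp]; exact normPart_smul_simplex hzs.1 ha0
  have hny : normPart (yPart p) = yPart zs := by
    rw [hyp]; exact normPart_smul_simplex hzs.2 ha0
  -- zh along the subsequence converges to p
  have hzh_lim : Tendsto (fun n => zh (φa n)) atTop (𝓝 p) := by
    have hd : Tendsto (fun n => z (φa n) - zh (φa n)) atTop (𝓝 0) := by
      rw [tendsto_zero_iff_norm_tendsto_zero]
      exact hdiff.comp hφmono.tendsto_atTop
    have := hφlim.sub hd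
    simpa using this
  -- zh along the subsequence converges to the projected point
  have hGlim : Tendsto (fun n => zh (φa n)) atTop
      (𝓝 (projOn (ZgeSet d1 d2) (p - η • Fop A p))) := by
    have hbnd : ∀ n, ‖zh (φa n) - projOn (ZgeSet d1 d2) (p - η • Fop A p)‖
        ≤ (1 + η * LF A) * ‖z (φa n) - p‖ := by
      intro n
      rw [hzhdef (φa n)]
      calc ‖projOn (ZgeSet d1 d2) (z (φa n) - η • Fop A (z (φa n)))
            - projOn (ZgeSet d1 d2) (p - η • Fop A p)‖
          ≤ ‖(z (φa n) - η • Fop A (z (φa n))) - (p - η • Fop A p)‖ :=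
            projOn_nonexpansive hne hcl hcv _ _
        _ = ‖(z (φa n) - p) - η • (Fop A (z (φa n)) - Fop A p)‖ := by
            congr 1
            rw [smul_sub]
            abel
        _ ≤ ‖z (φa n) - p‖ + ‖η • (Fop A (z (φa n)) - Fop A p)‖ := norm_sub_le _ _
        _ ≤ ‖z (φa n) - p‖ + η * (LF A * ‖z (φa n) - p‖) := by
            have h1 : ‖η • (Fop A (z (φa n)) - Fop A p)‖
                = η * ‖Fop A (z (φa n)) - Fop A p‖ := by
              rw [norm_smul, Real.norm_eq_abs, abs_of_nonneg hη0.le]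
            rw [h1]
            exact add_le_add_right (mul_le_mul_of_nonneg_left
              (Fop_lip hd1 hd2 (hzK (φa n)) hpK) hη0.le) _
        _ = (1 + η * LF A) * ‖z (φa n) - p‖ := by ring
    rw [tendsto_iff_dist_tendsto_zero]
    refine squeeze_zero (g := fun n => (1 + η * LF A) * ‖z (φa n) - p‖)
      (fun n => dist_nonneg) (fun n => ?_) ?_
    · rw [dist_eq_norm]
      exact hbnd n
    · have := hnorm0.const_mul (1 + η * LF A)
      simpa using this
  have hfix : projOn (ZgeSet d1 d2) (p - η • Fop A p) = p :=
    tendsto_nhds_unique hGlim hzh_lim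
  -- variational inequality at p
  have hVI : ∀ w ∈ ZgeSet d1 d2, 0 ≤ ⟪Fop A p, w - p⟫ := by
    intro w hw
    have h0 := (projOn_spec hne hcl hcv (p - η • Fop A p)).2 w hw
    rw [hfix] at h0
    have h1 : (p - η • Fop A p) - p = -(η • Fop A p) := by abel
    rw [h1, inner_neg_left, real_inner_smul_left] at h0
    by_contra hneg
    push_neg at hneg
    nlinarith
  -- the normalized point zs is a Nash equilibrium
  have hAyge : ∀ i, payoff A (xPart zs) (yPart zs) ≤ ∑ j, A i j * yPart zs j := by
    intro i
    have hwK : joinPt (EuclideanSpace.single i (1:ℝ)) (yPart zs) ∈ ZgeSet d1 d2 :=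
      Zset_subset_Zge ⟨single_mem_simplex i, hzs.2⟩
    have h0 := hVI _ hwK
    rw [inner_sub_right, inner_Fop_self A hpK] at h0
    have h1 : ⟪Fop A p, joinPt (EuclideanSpace.single i (1:ℝ)) (yPart zs)⟫
        = (∑ j, A i j * yPart zs j) - payoff A (xPart zs) (yPart zs)
          + payoff A (xPart zs) (yPart zs) * (1 - 1) := by
      rw [inner_Fop A p (joinPt (EuclideanSpace.single i (1:ℝ)) (yPart zs)), hnx, hny]
      have e1 : xPart (joinPt (EuclideanSpace.single i (1:ℝ)) (yPart zs))
          = EuclideanSpace.single i (1:ℝ) := rfl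
      have e2 : yPart (joinPt (EuclideanSpace.single i (1:ℝ)) (yPart zs)) = yPart zs := rfl
      rw [e1, e2, payoff_single_left, hzs.2.2, (single_mem_simplex i).2]
    rw [h1] at h0
    linarith
  have hAxle : ∀ j, (∑ i, A i j * xPart zs i) ≤ payoff A (xPart zs) (yPart zs) := by
    intro j
    have hwK : joinPt (xPart zs) (EuclideanSpace.single j (1:ℝ)) ∈ ZgeSet d1 d2 :=
      Zset_subset_Zge ⟨hzs.1, single_mem_simplex j⟩
    have h0 := hVI _ hwK
    rw [inner_sub_right, inner_Fop_self A hpK] at h0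
    have h1 : ⟪Fop A p, joinPt (xPart zs) (EuclideanSpace.single j (1:ℝ))⟫
        = payoff A (xPart zs) (yPart zs) - (∑ i, A i j * xPart zs i)
          + payoff A (xPart zs) (yPart zs) * (1 - 1) := by
      rw [inner_Fop A p (joinPt (xPart zs) (EuclideanSpace.single j (1:ℝ))), hnx, hny]
      have e1 : xPart (joinPt (xPart zs) (EuclideanSpace.single j (1:ℝ))) = xPart zs := rfl
      have e2 : yPart (joinPt (xPart zs) (EuclideanSpace.single j (1:ℝ)))
          = EuclideanSpace.single j (1:ℝ) := rfl
      rw [e1, e2, payoff_single_right, hzs.1.2, (single_mem_simplex j).2]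
    rw [h1] at h0
    linarith
  -- monotonicity with respect to p
  have hmonop : ∀ w ∈ ZgeSet d1 d2, 0 ≤ ⟪Fop A w, w - p⟫ := by
    intro w hw
    rw [inner_sub_right, inner_Fop_self A hw]
    have h1 : ⟪Fop A w, p⟫ = a * ⟪Fop A w, zs⟫ := by
      rw [hp, real_inner_smul_right]
    have h2 : ⟪Fop A w, zs⟫
        = payoff A (xPart zs) (normPart (yPart w))
          - payoff A (normPart (xPart w)) (yPart zs)
          + payoff A (normPart (xPart w)) (normPart (yPart w)) * (1 - 1) := by
      rw [inner_Fop A w zs, hzs.1.2, hzs.2.2]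
    have hXw := normPart_mem_simplex hw.1
    have hYw := normPart_mem_simplex hw.2
    have h3 : payoff A (xPart zs) (normPart (yPart w))
        ≤ payoff A (xPart zs) (yPart zs) := by
      rw [payoff_eq_right]
      calc ∑ j, normPart (yPart w) j * ∑ i, A i j * xPart zs i
          ≤ ∑ j, normPart (yPart w) j * payoff A (xPart zs) (yPart zs) :=
            Finset.sum_le_sum fun j _ =>
              mul_le_mul_of_nonneg_left (hAxle j) (hYw.1 j)
        _ = payoff A (xPart zs) (yPart zs) := by
            rw [← Finset.sum_mul, hYw.2, one_mul]
    have h4 : payoff A (xPart zs) (yPart zs)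
        ≤ payoff A (normPart (xPart w)) (yPart zs) := by
      conv_rhs => rw [payoff_eq_left]
      calc payoff A (xPart zs) (yPart zs)
          = ∑ i, normPart (xPart w) i * payoff A (xPart zs) (yPart zs) := by
            rw [← Finset.sum_mul, hXw.2, one_mul]
        _ ≤ ∑ i, normPart (xPart w) i * ∑ j, A i j * yPart zs j :=
            Finset.sum_le_sum fun i _ =>
              mul_le_mul_of_nonneg_left (hAyge i) (hXw.1 i)
    have h5 : ⟪Fop A w, zs⟫ ≤ 0 := by rw [h2]; linarith
    have h6 : ⟪Fop A w, p⟫ ≤ 0 := by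
      rw [h1]
      exact mul_nonpos_of_nonneg_of_nonpos ha0.le h5
    linarith
  -- Fejér monotonicity with respect to p
  have hstepp : ∀ t, ‖z (t + 1) - p‖ ≤ ‖z t - p‖ := by
    intro t
    have h0 := step_ineq hd1 hd2 hη0.le (hzK t) hpK hne (hzhdef t) (hzdef t)
      (hmonop (zh t) (hzhK t))
    have h1 : (0:ℝ) ≤ (1 - η * LF A) * D t := mul_nonneg hcoef.le (hDnn t)
    have h2 : ‖z (t+1) - p‖ ^ 2 ≤ ‖z t - p‖ ^ 2 := by
      have := hD
      nlinarith [h0]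
    exact le_of_pow_le_pow_left₀ two_ne_zero (norm_nonneg _) h2
  have hanti : Antitone (fun t => ‖z t - p‖) := antitone_nat_of_succ_le hstepp
  have hbdd : BddBelow (Set.range fun t => ‖z t - p‖) :=
    ⟨0, by rintro x ⟨t, rfl⟩; exact norm_nonneg _⟩
  have hconv := tendsto_atTop_ciInf hanti hbdd
  have hsub : Tendsto (fun n => ‖z (φa n) - p‖) atTop (𝓝 (⨅ t, ‖z t - p‖)) :=
    hconv.comp hφmono.tendsto_atTop
  have hiz : (⨅ t, ‖z t - p‖) = 0 := tendsto_nhds_unique hsub hnorm0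
  rw [tendsto_iff_dist_tendsto_zero]
  have : (fun t => dist (z t) p) = fun t => ‖z t - p‖ := by
    funext t
    exact dist_eq_norm _ _
  rw [this]
  rw [hiz] at hconv
  exact hconv


end
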